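/- Let L be a loop with commutator-associator filtration (L_i). For a ∈ L_p and b,c with b ∈ L_p, c ∈ L_q, the commutator satisfies [ab,c] ≡ [a,c][b,c] mod L_{p+q+1}. Hence the commutator induces a well-defined bilinear operation L_p/L_{p+1} × L_q/L_{q+1} → L_{p+q}/L_{p+q+1} on the associated graded abelian group. -/

import Mathlib

/-- A loop: a quasigroup with a two-sided identity. -/
class Loop (α : Type*) extends Mul α, One α where
  ldiv : α → α → α
  rdiv : α → α → α
  one_mul : ∀ a : α, 1 * a = a
  mul_one : ∀ a : α, a * 1 = a
  mul_ldiv : ∀ a b : α, a * ldiv a b = b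
  ldiv_mul : ∀ a b : α, ldiv a (a * b) = b
  rdiv_mul : ∀ a b : α, rdiv a b * b = a
  mul_rdiv : ∀ a b : α, rdiv (a * b) b = a

namespace Loop

variable {α : Type*} [Loop α]

/-- The commutator `[a,b] = (ba)\(ab)`. -/
def comm (a b : α) : α := ldiv (b * a) (a * b)

/-- The associator `(a,b,c) = (a(bc))\((ab)c)`. -/
def assoc (a b c : α) : α := ldiv (a * (b * c)) ((a * b) * c)

/-- The associator deviation indexed by a list of indices `αs = [α_n, ..., α_1]`
(stored with the *last* index first) applied to a list of arguments.
Level `0` (empty index list) is the associator. -/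
def dev : List ℕ → List α → α
  | [], [a, b, c] => assoc a b c
  | (k :: rest), args =>
      let A : α → α := fun x => dev rest (args.take (k - 1) ++ x :: args.drop (k + 1))
      ldiv (A (args.getD (k - 1) 1) * A (args.getD k 1))
        (A (args.getD (k - 1) 1 * args.getD k 1))
  | _, _ => 1

/-- A subset is a subloop if it contains `1` and is closed under
multiplication and both divisions. -/
def IsSubloop (S : Set α) : Prop :=
  (1 : α) ∈ S ∧ ∀ a ∈ S, ∀ b ∈ S, a * b ∈ S ∧ ldiv a b ∈ S ∧ rdiv a b ∈ S

/-- A subloop is normal if `xN = Nx`, `(Nx)y = N(xy)` and `y(xN) = (yx)N`. -/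
def IsNormal (S : Set α) : Prop :=
  IsSubloop S ∧
  (∀ x : α, {z | ∃ n ∈ S, z = x * n} = {z | ∃ n ∈ S, z = n * x}) ∧
  (∀ x y : α, {z | ∃ n ∈ S, z = (n * x) * y} = {z | ∃ n ∈ S, z = n * (x * y)}) ∧
  (∀ x y : α, {z | ∃ n ∈ S, z = y * (x * n)} = {z | ∃ n ∈ S, z = (y * x) * n})

/-- `N/M` is central in `L/M`: all commutators and associators involving an
element of `N` lie in `M`. -/
def CentralMod (N M : Set α) : Prop :=
  ∀ n ∈ N, ∀ x y : α,
    comm n x ∈ M ∧ comm x n ∈ M ∧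
    assoc n x y ∈ M ∧ assoc x n y ∈ M ∧ assoc x y n ∈ M

/-- `[N,L]`: the smallest normal subloop `M` such that `N/M` is central in `L/M`. -/
def bracket (N : Set α) : Set α := ⋂₀ {M | IsNormal M ∧ CentralMod N M}

end Loop

/-- The lower central series of a loop: `γ 1 = L`, `γ (i+1) = [γ i, L]`. -/
def Loop.gamma (α : Type*) [Loop α] : ℕ → Set α
  | 0 => Set.univ
  | 1 => Set.univ
  | (n + 2) => Loop.bracket (Loop.gamma α (n + 1))

namespace Loop

variable {α : Type*} [Loop α]

/-- A family `M i` of normal subloops is admissible for the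
commutator-associator filtration. -/
def Admissible (M : ℕ → Set α) : Prop :=
  (∀ i, IsNormal (M i)) ∧ M 1 = Set.univ ∧
  (∀ i p q, 1 ≤ p → 1 ≤ q → i ≤ p + q →
    ∀ a ∈ M p, ∀ b ∈ M q, comm a b ∈ M i) ∧
  (∀ i p q r, 1 ≤ p → 1 ≤ q → 1 ≤ r → i ≤ p + q + r →
    ∀ a ∈ M p, ∀ b ∈ M q, ∀ c ∈ M r, assoc a b c ∈ M i) ∧
  (∀ (i : ℕ) (idx ps : List ℕ) (xs : List α), idx ≠ [] →
    ps.length = idx.length + 3 → xs.length = idx.length + 3 →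
    (∀ j < idx.length, 1 ≤ idx.getD j 0 ∧ idx.getD j 0 ≤ (idx.length - j) + 2) →
    (∀ j < ps.length, 1 ≤ ps.getD j 0 ∧ xs.getD j 1 ∈ M (ps.getD j 0)) →
    i ≤ ps.sum → dev idx xs ∈ M i)

/-- The commutator-associator filtration: the smallest admissible family. -/
def casub (α : Type*) [Loop α] (i : ℕ) : Set α :=
  ⋂₀ {S | ∃ M : ℕ → Set α, Admissible M ∧ S = M i}

/-- Congruence modulo a (normal) subloop: `x ≡ y mod N` iff `x ∈ yN`. -/
def ModEq (N : Set α) (x y : α) : Prop := ∃ n ∈ N, x = y * n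

/-- Loop homomorphisms: maps preserving multiplication. -/
def IsLoopHom {β : Type*} [Loop β] (φ : α → β) : Prop :=
  ∀ a b : α, φ (a * b) = φ a * φ b

/-- The subloop generated by a subset. -/
def closure (S : Set α) : Set α := ⋂₀ {T | IsSubloop T ∧ S ⊆ T}

/-- Left-normed powers: `ypow y m = ((...(yy)y)...)y`. -/
def ypow (y : α) : ℕ → α
  | 0 => 1
  | (m + 1) => ypow y m * y

end Loop

section Higman

variable {L B : Type*} [Loop L] [AddCommGroup B]

/-- Multiplication in Higman's loop `(L, B)`. -/
def hmul (f : L → L → B) (x y : L × B) : L × B :=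
  (x.1 * y.1, x.2 + y.2 + f x.1 y.1)

/-- Left division in Higman's loop: `(l2,b2)\(l1,b1) = (l2\l1, b1-b2-f(l2, l2\l1))`. -/
def hldiv (f : L → L → B) (x y : L × B) : L × B :=
  (Loop.ldiv x.1 y.1, y.2 - x.2 - f x.1 (Loop.ldiv x.1 y.1))

/-- Right division in Higman's loop: `(l1,b1)/(l2,b2) = (l1/l2, b1-b2-f(l1/l2, l2))`. -/
def hrdiv (f : L → L → B) (x y : L × B) : L × B :=
  (Loop.rdiv x.1 y.1, x.2 - y.2 - f (Loop.rdiv x.1 y.1) y.1)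

/-- The commutator in Higman's loop. -/
def hcomm (f : L → L → B) (x y : L × B) : L × B :=
  hldiv f (hmul f y x) (hmul f x y)

/-- The associator in Higman's loop. -/
def hassoc (f : L → L → B) (x y z : L × B) : L × B :=
  hldiv f (hmul f x (hmul f y z)) (hmul f (hmul f x y) z)

end Higman


/-!
Modulo a normal subloop `N`, the identity `(ba)[a,b] = ab` lets one rewrite `(ab)c` as
`((ca)b)([a,c][b,c])`: each reassociation costs an associator and each swap a commutator, so
comparing with `(c(ab))[ab,c] = (ab)c` and cancelling `c(ab) ≡ (ca)b` gives
`[ab,c] ≡ [a,c][b,c]` as soon as the eight associators and commutators met along the way lie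
in `N`; the second argument is handled the same way. For `N = L_{p+q+1}` the degree bounds of
the filtration put all of them in `N`. Well-definedness on the graded pieces is then linearity:
`[an,c] ≡ [a,c][n,c]` with `[n,c] ∈ L_{p+q+1}` when `n ∈ L_{p+1}`.
-/

namespace Loop

theorem setOf_exists_mem_eq {α : Type*} (e : α ≃ α) (N : Set α) :
    {z | ∃ n ∈ N, z = e n} = e.symm ⁻¹' N := by
  rw [← Equiv.image_eq_preimage_symm]
  ext z
  simp only [Set.mem_ofPred_eq, Set.mem_image, eq_comm]

theorem setOf_exists_mem_sInter_eq {α : Type*} {S : Set (Set α)} (e₁ e₂ : α ≃ α)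
    (h : ∀ T ∈ S, {z | ∃ n ∈ T, z = e₁ n} = {z | ∃ n ∈ T, z = e₂ n}) :
    {z | ∃ n ∈ ⋂₀ S, z = e₁ n} = {z | ∃ n ∈ ⋂₀ S, z = e₂ n} := by
  simp only [setOf_exists_mem_eq, Set.preimage_sInter] at h ⊢
  exact Set.iInter₂_congr h

theorem exists_mem_eq_of_setOf_eq {α : Type*} {N : Set α} {f g : α → α}
    (h : {z | ∃ n ∈ N, z = f n} = {z | ∃ n ∈ N, z = g n}) {n : α} (hn : n ∈ N) :
    ∃ m ∈ N, f n = g m := by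
  have : f n ∈ {z | ∃ n ∈ N, z = f n} := ⟨n, hn, rfl⟩
  rwa [h] at this

variable {α : Type*} [Loop α]

def mulLeft (a : α) : α ≃ α := ⟨(a * ·), ldiv a, ldiv_mul a, mul_ldiv a⟩

def mulRight (a : α) : α ≃ α :=
  ⟨(· * a), (rdiv · a), fun b => mul_rdiv b a, fun b => rdiv_mul b a⟩

theorem mul_comm_mul (a b : α) : (b * a) * comm a b = a * b := mul_ldiv _ _

theorem mul_assoc_mul (x y z : α) : (x * (y * z)) * assoc x y z = (x * y) * z := mul_ldiv _ _

section Normal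

variable {N : Set α}

theorem isSubloop_sInter {S : Set (Set α)} (h : ∀ T ∈ S, IsSubloop T) : IsSubloop (⋂₀ S) :=
  ⟨fun T hT => (h T hT).1, fun a ha b hb =>
    ⟨fun T hT => ((h T hT).2 a (ha T hT) b (hb T hT)).1,
      fun T hT => ((h T hT).2 a (ha T hT) b (hb T hT)).2.1,
      fun T hT => ((h T hT).2 a (ha T hT) b (hb T hT)).2.2⟩⟩

theorem isNormal_sInter {S : Set (Set α)} (h : ∀ T ∈ S, IsNormal T) : IsNormal (⋂₀ S) :=
  ⟨isSubloop_sInter fun T hT => (h T hT).1,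
    fun x => setOf_exists_mem_sInter_eq (mulLeft x) (mulRight x) fun T hT => (h T hT).2.1 x,
    fun x y => setOf_exists_mem_sInter_eq ((mulRight x).trans (mulRight y)) (mulRight (x * y))
      fun T hT => (h T hT).2.2.1 x y,
    fun x y => setOf_exists_mem_sInter_eq ((mulLeft x).trans (mulLeft y)) (mulLeft (y * x))
      fun T hT => (h T hT).2.2.2 x y⟩

theorem IsNormal.exists_mul_eq_mem_mul (hN : IsNormal N) {n : α} (hn : n ∈ N) (x : α) :
    ∃ m ∈ N, x * n = m * x :=
  exists_mem_eq_of_setOf_eq (hN.2.1 x) hn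

theorem IsNormal.exists_mem_mul_eq_mul (hN : IsNormal N) {n : α} (hn : n ∈ N) (x : α) :
    ∃ m ∈ N, n * x = x * m :=
  exists_mem_eq_of_setOf_eq (hN.2.1 x).symm hn

theorem IsNormal.exists_mem_mul_mul_eq (hN : IsNormal N) {n : α} (hn : n ∈ N) (x y : α) :
    ∃ m ∈ N, (n * x) * y = m * (x * y) :=
  exists_mem_eq_of_setOf_eq (hN.2.2.1 x y) hn

theorem IsNormal.exists_mul_mul_eq_mul_mem (hN : IsNormal N) {n : α} (hn : n ∈ N) (x y : α) :
    ∃ m ∈ N, y * (x * n) = (y * x) * m :=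
  exists_mem_eq_of_setOf_eq (hN.2.2.2 x y) hn

theorem IsNormal.exists_mul_mem_eq_mul_mul (hN : IsNormal N) {n : α} (hn : n ∈ N) (x y : α) :
    ∃ m ∈ N, (y * x) * n = y * (x * m) :=
  exists_mem_eq_of_setOf_eq (hN.2.2.2 x y).symm hn

end Normal

namespace ModEq

variable {N : Set α} {x y z : α}

theorem refl (hN : IsNormal N) (x : α) : ModEq N x x := ⟨1, hN.1.1, (mul_one x).symm⟩

theorem symm (hN : IsNormal N) (h : ModEq N x y) : ModEq N y x := by
  obtain ⟨n, hn, rfl⟩ := h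
  obtain ⟨n₁, hn₁, e₁⟩ := hN.exists_mul_eq_mem_mul hn y
  have hn₁' : rdiv 1 n₁ ∈ N := (hN.1.2 1 hN.1.1 n₁ hn₁).2.2
  -- `y = (1/n₁ · n₁) y` lies in `N (n₁ y)`, hence in `(n₁ y) N = (y n) N`
  obtain ⟨m, hm, e₂⟩ := hN.exists_mem_mul_mul_eq hn₁' n₁ y
  rw [rdiv_mul, Loop.one_mul] at e₂
  obtain ⟨m', hm', e₃⟩ := hN.exists_mem_mul_eq_mul hm (n₁ * y)
  exact ⟨m', hm', by rw [e₁]; exact e₂.trans e₃⟩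

theorem trans (hN : IsNormal N) (h₁ : ModEq N x y) (h₂ : ModEq N y z) : ModEq N x z := by
  obtain ⟨n, hn, rfl⟩ := h₁
  obtain ⟨m, hm, rfl⟩ := h₂
  obtain ⟨k, hk, e⟩ := hN.exists_mul_mem_eq_mul_mul hn m z
  exact ⟨m * k, (hN.1.2 m hm k hk).1, e⟩

theorem mul_right (hN : IsNormal N) (w : α) (h : ModEq N x y) : ModEq N (x * w) (y * w) := by
  obtain ⟨n, hn, rfl⟩ := h
  obtain ⟨n₁, hn₁, e₁⟩ := hN.exists_mul_eq_mem_mul hn y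
  obtain ⟨n₂, hn₂, e₂⟩ := hN.exists_mem_mul_mul_eq hn₁ y w
  obtain ⟨n₃, hn₃, e₃⟩ := hN.exists_mem_mul_eq_mul hn₂ (y * w)
  exact ⟨n₃, hn₃, by rw [e₁, e₂, e₃]⟩

theorem mul_left (hN : IsNormal N) (w : α) (h : ModEq N x y) : ModEq N (w * x) (w * y) := by
  obtain ⟨n, hn, rfl⟩ := h
  exact hN.exists_mul_mul_eq_mul_mem hn y w

theorem cancel_left (hN : IsNormal N) {x' y' : α} (hx : ModEq N x x')
    (h : ModEq N (x * y) (x' * y')) : ModEq N y y' := by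
  obtain ⟨k, hk, e⟩ := ((hx.mul_right hN y).symm hN).trans hN h
  obtain ⟨m, hm, e'⟩ := hN.exists_mul_mem_eq_mul_mul hk y' x'
  refine ⟨m, hm, ?_⟩
  simpa only [ldiv_mul] using congrArg (ldiv x') (e.trans e')

end ModEq

theorem modEq_of_mem {N : Set α} {n : α} (hn : n ∈ N) (x : α) : ModEq N (x * n) x :=
  ⟨n, hn, rfl⟩

theorem modEq_mul_assoc {N : Set α} {x y z : α} (h : assoc x y z ∈ N) :
    ModEq N ((x * y) * z) (x * (y * z)) :=
  ⟨_, h, (mul_assoc_mul x y z).symm⟩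

theorem modEq_mul_comm {N : Set α} {a b : α} (h : comm a b ∈ N) : ModEq N (a * b) (b * a) :=
  ⟨_, h, (mul_comm_mul a b).symm⟩

theorem comm_mul_left_modEq {N : Set α} (hN : IsNormal N) {a b c : α}
    (h₁ : assoc a b c ∈ N) (h₂ : assoc a (c * b) (comm b c) ∈ N) (h₃ : assoc a c b ∈ N)
    (h₄ : assoc (c * a) (comm a c) b ∈ N) (h₅ : comm (comm a c) b ∈ N)
    (h₆ : assoc (c * a) b (comm a c) ∈ N)
    (h₇ : assoc ((c * a) * b) (comm a c) (comm b c) ∈ N) (h₈ : assoc c a b ∈ N) :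
    ModEq N (comm (a * b) c) (comm a c * comm b c) := by
  have : Trans (ModEq N) (ModEq N) (ModEq N) := ⟨fun h h' => h.trans hN h'⟩
  refine ((modEq_mul_assoc h₈).symm hN).cancel_left hN ?_
  calc (c * (a * b)) * comm (a * b) c
      = (a * b) * c := mul_comm_mul _ _
    ModEq N _ (a * (b * c)) := modEq_mul_assoc h₁
    _ = a * ((c * b) * comm b c) := by rw [mul_comm_mul]
    ModEq N _ ((a * (c * b)) * comm b c) := (modEq_mul_assoc h₂).symm hN
    ModEq N _ (((a * c) * b) * comm b c) := ((modEq_mul_assoc h₃).symm hN).mul_right hN _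
    _ = (((c * a) * comm a c) * b) * comm b c := by rw [mul_comm_mul]
    ModEq N _ (((c * a) * (comm a c * b)) * comm b c) :=
        (modEq_mul_assoc h₄).mul_right hN _
    ModEq N _ (((c * a) * (b * comm a c)) * comm b c) :=
        ((modEq_mul_comm h₅).mul_left hN _).mul_right hN _
    ModEq N _ ((((c * a) * b) * comm a c) * comm b c) :=
        ((modEq_mul_assoc h₆).symm hN).mul_right hN _
    ModEq N _ (((c * a) * b) * (comm a c * comm b c)) := modEq_mul_assoc h₇

theorem comm_mul_right_modEq {N : Set α} (hN : IsNormal N) {a c c' : α}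
    (h₁ : assoc a c c' ∈ N) (h₂ : assoc (c * a) (comm a c) c' ∈ N) (h₃ : comm (comm a c) c' ∈ N)
    (h₄ : assoc (c * a) c' (comm a c) ∈ N) (h₅ : assoc c a c' ∈ N)
    (h₆ : assoc c (c' * a) (comm a c') ∈ N) (h₇ : assoc c c' a ∈ N)
    (h₈ : assoc ((c * c') * a) (comm a c') (comm a c) ∈ N)
    (h₉ : comm (comm a c') (comm a c) ∈ N) :
    ModEq N (comm a (c * c')) (comm a c * comm a c') := by
  have : Trans (ModEq N) (ModEq N) (ModEq N) := ⟨fun h h' => h.trans hN h'⟩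
  refine (ModEq.refl hN ((c * c') * a)).cancel_left hN ?_
  calc ((c * c') * a) * comm a (c * c')
      = a * (c * c') := mul_comm_mul _ _
    ModEq N _ ((a * c) * c') := (modEq_mul_assoc h₁).symm hN
    _ = ((c * a) * comm a c) * c' := by rw [mul_comm_mul]
    ModEq N _ ((c * a) * (comm a c * c')) := modEq_mul_assoc h₂
    ModEq N _ ((c * a) * (c' * comm a c)) := (modEq_mul_comm h₃).mul_left hN _
    ModEq N _ (((c * a) * c') * comm a c) := (modEq_mul_assoc h₄).symm hN
    ModEq N _ ((c * (a * c')) * comm a c) := (modEq_mul_assoc h₅).mul_right hN _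
    _ = (c * ((c' * a) * comm a c')) * comm a c := by rw [mul_comm_mul]
    ModEq N _ (((c * (c' * a)) * comm a c') * comm a c) :=
        ((modEq_mul_assoc h₆).symm hN).mul_right hN _
    ModEq N _ ((((c * c') * a) * comm a c') * comm a c) :=
        (((modEq_mul_assoc h₇).symm hN).mul_right hN _).mul_right hN _
    ModEq N _ (((c * c') * a) * (comm a c' * comm a c)) := modEq_mul_assoc h₈
    ModEq N _ (((c * c') * a) * (comm a c * comm a c')) := (modEq_mul_comm h₉).mul_left hN _

theorem mem_casub {i : ℕ} {x : α} : x ∈ casub α i ↔ ∀ M, Admissible M → x ∈ M i :=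
  ⟨fun h M hM => h _ ⟨M, hM, rfl⟩, by rintro h _ ⟨M, hM, rfl⟩; exact h M hM⟩

theorem isNormal_casub (i : ℕ) : IsNormal (casub α i) :=
  isNormal_sInter (by rintro _ ⟨M, hM, rfl⟩; exact hM.1 i)

theorem mem_casub_one (x : α) : x ∈ casub α 1 :=
  mem_casub.2 fun _ hM => hM.2.1 ▸ trivial

theorem comm_mem_casub {i p q : ℕ} (hp : 1 ≤ p) (hq : 1 ≤ q) (hi : i ≤ p + q)
    {a b : α} (ha : a ∈ casub α p) (hb : b ∈ casub α q) : comm a b ∈ casub α i :=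
  mem_casub.2 fun M hM => hM.2.2.1 i p q hp hq hi a (mem_casub.1 ha M hM) b (mem_casub.1 hb M hM)

theorem assoc_mem_casub {i p q r : ℕ} (hp : 1 ≤ p) (hq : 1 ≤ q) (hr : 1 ≤ r)
    (hi : i ≤ p + q + r) {a b c : α} (ha : a ∈ casub α p) (hb : b ∈ casub α q)
    (hc : c ∈ casub α r) : assoc a b c ∈ casub α i :=
  mem_casub.2 fun M hM => hM.2.2.2.1 i p q r hp hq hr hi a (mem_casub.1 ha M hM)
    b (mem_casub.1 hb M hM) c (mem_casub.1 hc M hM)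

theorem comm_mul_left_modEq_casub {s t u m : ℕ} (hs : 1 ≤ s) (ht : 1 ≤ t) (hu : 1 ≤ u)
    (hm₁ : m ≤ s + t + u) (hm₂ : m ≤ s + u + 1) (hm₃ : m ≤ t + u + 1)
    {a b c : α} (ha : a ∈ casub α s) (hb : b ∈ casub α t) (hc : c ∈ casub α u) :
    ModEq (casub α m) (comm (a * b) c) (comm a c * comm b c) := by
  have hac : comm a c ∈ casub α (s + u) := comm_mem_casub hs hu le_rfl ha hc
  have hbc : comm b c ∈ casub α (t + u) := comm_mem_casub ht hu le_rfl hb hc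
  have h1 := mem_casub_one (α := α)
  apply comm_mul_left_modEq (isNormal_casub m)
  · exact assoc_mem_casub hs ht hu hm₁ ha hb hc
  · exact assoc_mem_casub hs le_rfl (by omega) (by omega) ha (h1 _) hbc
  · exact assoc_mem_casub hs hu ht (by omega) ha hc hb
  · exact assoc_mem_casub le_rfl (by omega) ht (by omega) (h1 _) hac hb
  · exact comm_mem_casub (by omega) ht (by omega) hac hb
  · exact assoc_mem_casub le_rfl ht (by omega) (by omega) (h1 _) hb hac
  · exact assoc_mem_casub le_rfl (by omega) (by omega) (by omega) (h1 _) hac hbc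
  · exact assoc_mem_casub hu hs ht (by omega) hc ha hb

theorem comm_mul_right_modEq_casub {s u v m : ℕ} (hs : 1 ≤ s) (hu : 1 ≤ u) (hv : 1 ≤ v)
    (hm₁ : m ≤ s + u + v) (hm₂ : m ≤ s + u + 1) (hm₃ : m ≤ s + v + 1)
    {a c c' : α} (ha : a ∈ casub α s) (hc : c ∈ casub α u) (hc' : c' ∈ casub α v) :
    ModEq (casub α m) (comm a (c * c')) (comm a c * comm a c') := by
  have hac : comm a c ∈ casub α (s + u) := comm_mem_casub hs hu le_rfl ha hc
  have hac' : comm a c' ∈ casub α (s + v) := comm_mem_casub hs hv le_rfl ha hc'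
  have h1 := mem_casub_one (α := α)
  apply comm_mul_right_modEq (isNormal_casub m)
  · exact assoc_mem_casub hs hu hv hm₁ ha hc hc'
  · exact assoc_mem_casub le_rfl (by omega) hv (by omega) (h1 _) hac hc'
  · exact comm_mem_casub (by omega) hv (by omega) hac hc'
  · exact assoc_mem_casub le_rfl hv (by omega) (by omega) (h1 _) hc' hac
  · exact assoc_mem_casub hu hs hv (by omega) hc ha hc'
  · exact assoc_mem_casub hu le_rfl (by omega) (by omega) hc (h1 _) hac'
  · exact assoc_mem_casub hu hv hs (by omega) hc hc' ha
  · exact assoc_mem_casub le_rfl (by omega) (by omega) (by omega) (h1 _) hac' hac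
  · exact comm_mem_casub (by omega) (by omega) (by omega) hac' hac

theorem comm_modEq_casub_of_modEq_left {s u : ℕ} (hs : 1 ≤ s) (hu : 1 ≤ u) {a a' c : α}
    (ha' : a' ∈ casub α s) (hc : c ∈ casub α u) (h : ModEq (casub α (s + 1)) a a') :
    ModEq (casub α (s + u + 1)) (comm a c) (comm a' c) := by
  obtain ⟨n, hn, rfl⟩ := h
  exact (comm_mul_left_modEq_casub hs (by omega) hu (by omega) (by omega) (by omega)
    ha' hn hc).trans (isNormal_casub _)
    (modEq_of_mem (comm_mem_casub (by omega) hu (by omega) hn hc) _)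

theorem comm_modEq_casub_of_modEq_right {s u : ℕ} (hs : 1 ≤ s) (hu : 1 ≤ u) {a c c' : α}
    (ha : a ∈ casub α s) (hc' : c' ∈ casub α u) (h : ModEq (casub α (u + 1)) c c') :
    ModEq (casub α (s + u + 1)) (comm a c) (comm a c') := by
  obtain ⟨n, hn, rfl⟩ := h
  exact (comm_mul_right_modEq_casub hs hu (by omega) (by omega) (by omega) (by omega)
    ha hc' hn).trans (isNormal_casub _)
    (modEq_of_mem (comm_mem_casub hs (by omega) (by omega) ha hn) _)

end Loop

/-- for `a, b ∈ L_p` and `c ∈ L_q`, the commutator satisfies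
`[ab,c] ≡ [a,c][b,c] mod L_{p+q+1}` (and similarly in the second argument);
moreover `[a,c] ∈ L_{p+q}` and the class of `[a,c]` modulo `L_{p+q+1}` only
depends on the classes of `a` mod `L_{p+1}` and `c` mod `L_{q+1}`, so the
commutator induces a well-defined bilinear operation
`L_p/L_{p+1} × L_q/L_{q+1} → L_{p+q}/L_{p+q+1}`. -/
theorem commutator_bilinear {L : Type*} [Loop L] (p q : ℕ) (hp : 1 ≤ p) (hq : 1 ≤ q)
    (a b : L) (ha : a ∈ Loop.casub L p) (hb : b ∈ Loop.casub L p)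
    (c c' : L) (hc : c ∈ Loop.casub L q) (hc' : c' ∈ Loop.casub L q) :
    Loop.comm a c ∈ Loop.casub L (p + q) ∧
    Loop.ModEq (Loop.casub L (p + q + 1))
      (Loop.comm (a * b) c) (Loop.comm a c * Loop.comm b c) ∧
    Loop.ModEq (Loop.casub L (p + q + 1))
      (Loop.comm a (c * c')) (Loop.comm a c * Loop.comm a c') ∧
    (∀ a' ∈ Loop.casub L p, Loop.ModEq (Loop.casub L (p + 1)) a a' →
      Loop.ModEq (Loop.casub L (p + q + 1)) (Loop.comm a c) (Loop.comm a' c)) ∧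
    (Loop.ModEq (Loop.casub L (q + 1)) c c' →
      Loop.ModEq (Loop.casub L (p + q + 1)) (Loop.comm a c) (Loop.comm a c')) := by
  refine ⟨Loop.comm_mem_casub hp hq le_rfl ha hc, ?_, ?_, ?_, ?_⟩
  · exact Loop.comm_mul_left_modEq_casub hp hp hq (by omega) le_rfl (by omega) ha hb hc
  · exact Loop.comm_mul_right_modEq_casub hp hq hq (by omega) le_rfl (by omega) ha hc hc'
  · exact fun _ ha' => Loop.comm_modEq_casub_of_modEq_left hp hq ha' hc
  · exact Loop.comm_modEq_casub_of_modEq_right hp hq ha hc'
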